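/- Let 2 ≤ i < j ≤ m−1, let n ≥ 2, and suppose m < 2j. Then α_j ≱_PS α_i; that is, there exists a profile of n preferences over m candidates at which the i-approval rule α_i is manipulable but the j-approval rule α_j is not manipulable. -/

import Mathlib

/-- A preference order on `m` candidates: `σ c` is the position of candidate `c`
(position `0` is the most preferred). `σ c < σ d` means `c` is strictly preferred to `d`. -/
abbrev Pref (m : ℕ) := Fin m ≃ Fin m

/-- A voting rule for `n` voters and `m` candidates. -/
abbrev Rule (m n : ℕ) := (Fin n → Pref m) → Fin m

/-- Total score of candidate `c` under score vector `s` (indexed by position) at profile `P`. -/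
def score {m n : ℕ} (s : Fin m → ℕ) (P : Fin n → Pref m) (c : Fin m) : ℕ :=
  ∑ v, s (P v c)

/-- The scoring rule with score vector `s`: the winner is the candidate that is first in the
lexicographic tie-breaking order (i.e. has the least index) among those of maximal score. -/
def winner {m n : ℕ} [NeZero m] (s : Fin m → ℕ) (P : Fin n → Pref m) : Fin m :=
  (Finset.univ.filter fun c => ∀ d, score s P d ≤ score s P c).min' (by
    obtain ⟨c, -, hc⟩ := Finset.exists_max_image Finset.univ (score s P) Finset.univ_nonempty
    exact ⟨c, Finset.mem_filter.mpr ⟨Finset.mem_univ c, fun d => hc d (Finset.mem_univ d)⟩⟩)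

/-- `k`-approval, `α_k`: one point for each of the top `k` positions. -/
def approval (m n k : ℕ) [NeZero m] : Rule m n :=
  winner (fun r => if (r : ℕ) < k then 1 else 0)

/-- `k`-Borda, `β_k`: `max (0, k - r + 1)` points for (`1`-indexed) position `r`, i.e. `k - r`
(truncated subtraction) points for `0`-indexed position `r`. -/
def kBorda (m n k : ℕ) [NeZero m] : Rule m n :=
  winner (fun r => k - (r : ℕ))

/-- `f` is manipulable at profile `P`: some voter `v` can misreport some preference `Q` and
obtain an outcome strictly preferred (by `v`'s true preferences) to the sincere outcome. -/
def Manipulable {m n : ℕ} (f : Rule m n) (P : Fin n → Pref m) : Prop :=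
  ∃ (v : Fin n) (Q : Pref m), P v (f (Function.update P v Q)) < P v (f P)

/-- `f ≥_PS g` : every profile at which `g` is manipulable is one at which `f` is manipulable. -/
def MoreManip {m n : ℕ} (f g : Rule m n) : Prop :=
  ∀ P : Fin n → Pref m, Manipulable g P → Manipulable f P

/-!
Two voter types suffice: voter `0` reports `A` and every other voter reports `B`.

If `m + 2 ≤ 2j`, let `L = m - j + 1`. `A` ranks `0` first and `L` second, `B` ranks `L` first and
`0` second, and both continue with `1, …, L - 1`; so `0` wins every `α_k` with `k ≥ 2`, beating `L`
on the tie-break. Under `α_i` a `B`-voter who moves `0, …, L - 1` below the approved block makes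
`L` win. Under `α_j` this fails: `0, …, L - 1` lie in the top `j` of both `A` and `B`, and since
`L > m - j` every ballot approves one of them, which then ties `L` and precedes it.

If `m + 1 = 2j`, `A` is the identity ranking and `B` is `j, j - 1, j + 1, …, m - 1, j - 2, …, 0`.
Under `α_j` candidate `j - 1` wins. Voter `0` cannot promote any of `0, …, j - 2`: a ballot
approving `j` of the `2j - 1` candidates approves one of the `j` candidates `j - 1, …, m - 1`
approved by every `B`-voter. A `B`-voter cannot make `j` win, since `j - 1` keeps voter `0`'s
approval and precedes `j`. Under `α_i` a `B`-voter makes `j` win when `n ≥ 3`; when `n = 2` the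
sincere winner is `0`, and the `B`-voter makes `1` win instead.
-/

open Finset

section Scores

variable {m n : ℕ} (s : Fin m → ℕ)

theorem score_update_add (P : Fin n → Pref m) (v : Fin n) (Q : Pref m) (c : Fin m) :
    score s (Function.update P v Q) c + s (P v c) = score s P c + s (Q c) := by
  unfold score
  rw [← add_sum_erase _ _ (mem_univ v), ← add_sum_erase _ _ (mem_univ v),
    sum_congr rfl fun u hu => by rw [Function.update_of_ne (ne_of_mem_erase hu)]]
  simp only [Function.update_self]
  ring

variable [NeZero n]

def twoType (A B : Pref m) : Fin n → Pref m := fun v => if v = 0 then A else B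

theorem score_twoType (A B : Pref m) (c : Fin m) :
    score s (twoType A B : Fin n → Pref m) c = s (A c) + (n - 1) * s (B c) := by
  unfold score twoType
  rw [← add_sum_erase _ _ (mem_univ 0), if_pos rfl,
    sum_congr rfl fun u hu => by rw [if_neg (ne_of_mem_erase hu)], sum_const,
    card_erase_of_mem (mem_univ _), card_univ, Fintype.card_fin, smul_eq_mul]

theorem score_update_twoType_zero (A B Q : Pref m) (c : Fin m) :
    score s (Function.update (twoType A B : Fin n → Pref m) 0 Q) c
      = s (Q c) + (n - 1) * s (B c) := by
  have h := score_update_add s (twoType A B : Fin n → Pref m) 0 Q c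
  rw [score_twoType] at h
  simp only [twoType, if_true] at h
  omega

theorem score_update_twoType_of_ne (A B Q : Pref m) {v : Fin n} (hv : v ≠ 0) (c : Fin m) :
    score s (Function.update (twoType A B : Fin n → Pref m) v Q) c + s (B c)
      = s (A c) + (n - 1) * s (B c) + s (Q c) := by
  have h := score_update_add s (twoType A B : Fin n → Pref m) v Q c
  rwa [score_twoType, twoType, if_neg hv] at h

end Scores

section Winner

variable {m n : ℕ} [NeZero m] (s : Fin m → ℕ) (P : Fin n → Pref m)

theorem score_le_score_winner (d : Fin m) : score s P d ≤ score s P (winner s P) :=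
  (mem_filter.mp ((univ.filter fun c => ∀ d, score s P d ≤ score s P c).min'_mem _)).2 d

theorem winner_le_of_forall_score_le {d : Fin m} (hd : ∀ e, score s P e ≤ score s P d) :
    winner s P ≤ d :=
  min'_le _ _ (mem_filter.mpr ⟨mem_univ _, hd⟩)

theorem winner_eq_of_forall {c : Fin m} (hmax : ∀ d, score s P d ≤ score s P c)
    (hlt : ∀ d < c, score s P d < score s P c) : winner s P = c := by
  refine (winner_le_of_forall_score_le s P hmax).eq_of_not_lt fun h => ?_
  exact (hlt _ h).not_ge (score_le_score_winner s P c)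

theorem winner_ne_of_lt_of_score_le {c d : Fin m} (hdc : d < c)
    (hcd : score s P c ≤ score s P d) : winner s P ≠ c := by
  rintro hc
  have hd : winner s P ≤ d := winner_le_of_forall_score_le s P fun e =>
    (score_le_score_winner s P e).trans (hc ▸ hcd)
  exact (hc ▸ hd).not_gt hdc

end Winner

section Approval

variable {m : ℕ} (k : ℕ)

def approvalVec (r : Fin m) : ℕ := if (r : ℕ) < k then 1 else 0

variable {k} {r : Fin m}

theorem approvalVec_of_lt (h : (r : ℕ) < k) : approvalVec k r = 1 := if_pos h

theorem approvalVec_of_le (h : k ≤ (r : ℕ)) : approvalVec k r = 0 := if_neg h.not_gt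

theorem approvalVec_eq_zero_or_one : approvalVec k r = 0 ∨ approvalVec k r = 1 := by
  unfold approvalVec; split_ifs <;> simp

theorem approvalVec_le_one : approvalVec k r ≤ 1 := by
  rcases approvalVec_eq_zero_or_one (k := k) (r := r) with h | h <;> omega

theorem approvalVec_antitone : Antitone (approvalVec k : Fin m → ℕ) := by
  intro a b hab
  have : (a : ℕ) ≤ b := hab
  unfold approvalVec
  split_ifs <;> omega

theorem approval_eq_winner (n : ℕ) [NeZero m] : approval m n k = winner (approvalVec k) := rfl

theorem score_approvalVec_le {n : ℕ} (P : Fin n → Pref m) (c : Fin m) :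
    score (approvalVec k) P c ≤ n := by
  unfold score
  calc _ ≤ ∑ _v : Fin n, 1 := sum_le_sum fun v _ => approvalVec_le_one
    _ = n := by simp

theorem exists_mem_approvalVec_eq_one (Q : Pref m) {S : Finset (Fin m)} (hS : m - k < #S) :
    ∃ d ∈ S, approvalVec k (Q d) = 1 := by
  by_contra! h
  have hsub : S.image (fun d => (Q d : ℕ)) ⊆ Ico k m := fun x hx => by
    obtain ⟨d, hd, rfl⟩ := mem_image.mp hx
    refine mem_Ico.mpr ⟨not_lt.mp fun hlt => h d hd (approvalVec_of_lt hlt), (Q d).2⟩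
  have := card_le_card hsub
  rw [card_image_of_injective (f := fun d => (Q d : ℕ)) S (Fin.val_injective.comp Q.injective),
    Nat.card_Ico] at this
  omega

end Approval

noncomputable def Pref.ofPositions {m : ℕ} (f : ℕ → ℕ) (hf : ∀ c < m, f c < m)
    (hinj : ∀ a < m, ∀ b < m, f a = f b → a = b) : Pref m :=
  Equiv.ofBijective (fun c => ⟨f c, hf c c.2⟩) <| Finite.injective_iff_bijective.mp
    fun a b h => Fin.ext (hinj a a.2 b b.2 (congrArg Fin.val h))

@[simp]
theorem Pref.ofPositions_val {m : ℕ} (f : ℕ → ℕ) (hf : ∀ c < m, f c < m)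
    (hinj : ∀ a < m, ∀ b < m, f a = f b → a = b) (c : Fin m) :
    (Pref.ofPositions f hf hinj c : ℕ) = f c :=
  rfl

section Rankings

variable {m : ℕ} (L : ℕ) (hL : L < m)

/-- The ranking `L, L + 1, …, m - 1, 1, …, L - 1, 0`. -/
noncomputable def liePref (h0 : 0 < L) : Pref m :=
  Pref.ofPositions (fun c => if c = 0 then m - 1 else if c < L then c + m - L - 1 else c - L)
    (by intro c hc; split_ifs <;> omega) (by intro a ha b hb h; split_ifs at h <;> omega)

theorem liePref_self (h0 : 0 < L) : (liePref L hL h0 ⟨L, hL⟩ : ℕ) = 0 := by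
  simp [liePref, h0.ne']

theorem le_liePref_of_lt (h0 : 0 < L) {c : Fin m} (hc : (c : ℕ) < L) :
    m - L ≤ (liePref L hL h0 c : ℕ) := by
  simp only [liePref, Pref.ofPositions_val]; split_ifs <;> omega

/-- The ranking `0, L, 1, …, L - 1, L + 1, …, m - 1`. -/
noncomputable def wideA : Pref m :=
  Pref.ofPositions (fun c => if c = 0 then 0 else if c = L then 1 else if c < L then c + 1 else c)
    (by intro c hc; split_ifs <;> omega) (by intro a ha b hb h; split_ifs at h <;> omega)

/-- The ranking `L, 0, 1, …, L - 1, L + 1, …, m - 1`. -/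
noncomputable def wideB : Pref m :=
  Pref.ofPositions (fun c => if c = L then 0 else if c < L then c + 1 else c)
    (by intro c hc; split_ifs <;> omega) (by intro a ha b hb h; split_ifs at h <;> omega)

theorem wideA_zero [NeZero m] : (wideA L hL 0 : ℕ) = 0 := by simp [wideA]

theorem wideA_self (h0 : 0 < L) : (wideA L hL ⟨L, hL⟩ : ℕ) = 1 := by simp [wideA, h0.ne']

theorem wideA_le_of_lt {c : Fin m} (hc : (c : ℕ) < L) : (wideA L hL c : ℕ) ≤ L := by
  simp only [wideA, Pref.ofPositions_val]; split_ifs <;> omega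

theorem wideB_zero [NeZero m] (h0 : 0 < L) : (wideB L hL 0 : ℕ) = 1 := by simp [wideB, h0.ne, h0]

theorem wideB_self : (wideB L hL ⟨L, hL⟩ : ℕ) = 0 := by simp [wideB]

theorem wideB_le_of_lt {c : Fin m} (hc : (c : ℕ) < L) : (wideB L hL c : ℕ) ≤ L := by
  simp only [wideB, Pref.ofPositions_val]; split_ifs <;> omega

end Rankings

section Wide

variable {m n : ℕ} [NeZero m] [NeZero n] (L : ℕ) (hL : L < m) {k : ℕ}

theorem approval_wide_eq_zero (h0 : 0 < L) (hk : 2 ≤ k) :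
    approval m n k (twoType (wideA L hL) (wideB L hL)) = 0 := by
  have h0score :
      score (approvalVec k) (twoType (wideA L hL) (wideB L hL) : Fin n → Pref m) 0 = n := by
    rw [score_twoType, approvalVec_of_lt (r := wideA L hL 0) (by rw [wideA_zero]; omega),
      approvalVec_of_lt (r := wideB L hL 0) (by rw [wideB_zero L hL h0]; omega)]
    have := NeZero.pos n
    omega
  rw [approval_eq_winner]
  exact winner_eq_of_forall _ _ (fun d => h0score.symm ▸ score_approvalVec_le _ d)
    fun d hd => absurd hd (Fin.not_lt_zero d)

theorem approval_wide_manipulable (hn : 2 ≤ n) (h0 : 0 < L) (hk : 2 ≤ k) (hkL : k + L ≤ m) :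
    Manipulable (approval m n k) (twoType (wideA L hL) (wideB L hL)) := by
  have := Fin.nontrivial_iff_two_le.mpr hn
  obtain ⟨v, hv⟩ := exists_ne (0 : Fin n)
  have hscore := score_update_twoType_of_ne (approvalVec k) (wideA L hL) (wideB L hL)
    (liePref L hL h0) hv
  have hwin : winner (approvalVec k)
      (Function.update (twoType (wideA L hL) (wideB L hL)) v (liePref L hL h0)) = ⟨L, hL⟩ := by
    have hsL := hscore ⟨L, hL⟩
    rw [approvalVec_of_lt (r := wideA L hL _) (by rw [wideA_self L hL h0]; omega),
      approvalVec_of_lt (r := wideB L hL _) (by rw [wideB_self]; omega),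
      approvalVec_of_lt (r := liePref L hL h0 _) (by rw [liePref_self L hL h0]; omega)] at hsL
    refine winner_eq_of_forall _ _ (fun d => ?_) fun d hd => ?_
    · have := score_approvalVec_le (k := k)
        (Function.update (twoType (wideA L hL) (wideB L hL)) v (liePref L hL h0)) d
      omega
    · have hsd := hscore d
      rw [approvalVec_of_le (le_liePref_of_lt L hL h0 hd |>.trans' (by omega))] at hsd
      have := approvalVec_le_one (k := k) (r := wideA L hL d)
      rcases approvalVec_eq_zero_or_one (k := k) (r := wideB L hL d) with h | h <;>
        rw [h] at hsd <;> omega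
  refine ⟨v, liePref L hL h0, ?_⟩
  rw [approval_eq_winner, hwin, ← approval_eq_winner, approval_wide_eq_zero L hL h0 hk]
  simp only [twoType, if_neg hv, Fin.lt_def, wideB_self, wideB_zero L hL h0]
  omega

theorem approval_wide_not_manipulable (hLk : L < k) (hmk : m - k < L) :
    ¬ Manipulable (approval m n k) (twoType (wideA L hL) (wideB L hL)) := by
  have h0 : 0 < L := by omega
  rintro ⟨v, Q, hlt⟩
  rw [approval_wide_eq_zero L hL h0 (by omega), approval_eq_winner] at hlt
  by_cases hv : v = 0
  · subst hv
    simp only [twoType, if_pos, Fin.lt_def, wideA_zero] at hlt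
    exact Nat.not_lt_zero _ hlt
  simp only [twoType, if_neg hv, Fin.lt_def, wideB_zero L hL h0] at hlt
  have hw : winner (approvalVec k) (Function.update (twoType (wideA L hL) (wideB L hL)) v Q)
      = ⟨L, hL⟩ := (wideB L hL).injective (Fin.ext (by rw [wideB_self]; omega))
  obtain ⟨d, hdS, hdQ⟩ := exists_mem_approvalVec_eq_one Q (S := Iio ⟨L, hL⟩)
    (by rwa [Fin.card_Iio])
  have hd : d < ⟨L, hL⟩ := mem_Iio.mp hdS
  refine winner_ne_of_lt_of_score_le _ _ hd ?_ hw
  have hsd := score_update_twoType_of_ne (approvalVec k) (wideA L hL) (wideB L hL) Q hv d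
  have hsL := score_update_twoType_of_ne (approvalVec k) (wideA L hL) (wideB L hL) Q hv ⟨L, hL⟩
  rw [approvalVec_of_lt ((wideA_le_of_lt L hL hd).trans_lt hLk),
    approvalVec_of_lt ((wideB_le_of_lt L hL hd).trans_lt hLk), hdQ] at hsd
  rw [approvalVec_of_lt (by rw [wideB_self]; omega)] at hsL
  have := approvalVec_le_one (k := k) (r := wideA L hL ⟨L, hL⟩)
  have := approvalVec_le_one (k := k) (r := Q ⟨L, hL⟩)
  omega

end Wide

theorem approval_update_refl_liePref_one {m k : ℕ} [NeZero m] (hm : 1 < m) (hk : 2 ≤ k)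
    (hkm : k < m) (B : Pref m) :
    approval m 2 k (Function.update (twoType (Equiv.refl _) B) 1 (liePref 1 hm one_pos))
      = ⟨1, hm⟩ := by
  have hscore := score_update_twoType_of_ne (n := 2) (approvalVec k) (Equiv.refl _) B
    (liePref 1 hm one_pos) (v := 1) (by decide)
  have hs1 := hscore ⟨1, hm⟩
  rw [Equiv.refl_apply, approvalVec_of_lt (r := ⟨1, hm⟩) (by simp only; omega),
    approvalVec_of_lt (r := liePref 1 hm one_pos _) (by rw [liePref_self]; omega)] at hs1
  rw [approval_eq_winner]
  refine winner_eq_of_forall _ _ (fun d => ?_) fun d hd => ?_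
  · have := score_approvalVec_le (k := k)
      (Function.update (twoType (Equiv.refl _) B : Fin 2 → Pref m) 1 (liePref 1 hm one_pos)) d
    omega
  · obtain rfl : d = 0 := Fin.ext (by have : (d : ℕ) < 1 := hd; simp only [Fin.val_zero]; omega)
    have hs0 := hscore 0
    rw [approvalVec_of_le (r := liePref 1 hm one_pos 0)
      ((le_liePref_of_lt 1 hm one_pos (by simp only [Fin.val_zero]; omega)).trans' (by omega))]
      at hs0
    have := approvalVec_le_one (k := k) (r := (Equiv.refl (Fin m)) 0)
    omega

section Tight

variable {m : ℕ} (t : ℕ) (h0 : 0 < t) (ht : t < m)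

/-- The ranking `t, t - 1, t + 1, …, m - 1, t - 2, …, 0`. -/
noncomputable def tightB : Pref m :=
  Pref.ofPositions
    (fun c => if c = t then 0 else if c + 1 = t then 1 else if t < c then c - t + 1 else m - 1 - c)
    (by intro c hc; split_ifs <;> omega) (by intro a ha b hb h; split_ifs at h <;> omega)

theorem tightB_self : (tightB t h0 ht ⟨t, ht⟩ : ℕ) = 0 := by simp [tightB]

theorem tightB_pred : (tightB t h0 ht ⟨t - 1, by omega⟩ : ℕ) = 1 := by
  simp only [tightB, Pref.ofPositions_val]; split_ifs <;> omega

theorem tightB_of_lt {c : Fin m} (hc : (c : ℕ) + 1 < t) : (tightB t h0 ht c : ℕ) = m - 1 - c := by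
  simp only [tightB, Pref.ofPositions_val]; split_ifs <;> omega

theorem tightB_le_of_le {c : Fin m} (hc : t ≤ (c : ℕ) + 1) : (tightB t h0 ht c : ℕ) ≤ m - t := by
  simp only [tightB, Pref.ofPositions_val]; split_ifs <;> omega

theorem tightB_zero [NeZero m] (h1 : 1 < t) : (tightB t h0 ht 0 : ℕ) = m - 1 := by
  rw [tightB_of_lt t h0 ht (by rw [Fin.val_zero]; omega), Fin.val_zero, Nat.sub_zero]

variable {n : ℕ} [NeZero m] [NeZero n] {k : ℕ}

theorem approval_tight_eq_pred (hn : 2 ≤ n) (hk : 2 ≤ k) (hkm : k + t ≤ m + 1)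
    (hn3 : k < t → 3 ≤ n) :
    approval m n k (twoType (Equiv.refl _) (tightB t h0 ht)) = ⟨t - 1, by omega⟩ := by
  set p : Fin m := ⟨t - 1, by omega⟩
  have hscore (d : Fin m) : score (approvalVec k)
      (twoType (Equiv.refl _) (tightB t h0 ht) : Fin n → Pref m) d =
      approvalVec k d + (n - 1) * approvalVec k (tightB t h0 ht d) :=
    score_twoType _ _ _ d
  have hp : score (approvalVec k) (twoType (Equiv.refl _) (tightB t h0 ht) : Fin n → Pref m) p =
      approvalVec k p + (n - 1) := by
    rw [hscore, approvalVec_of_lt (r := tightB t h0 ht p) (by rw [tightB_pred]; omega), mul_one]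
  have hp1 : 1 < approvalVec k p + (n - 1) := by
    by_cases h : t - 1 < k
    · rw [approvalVec_of_lt h]; omega
    · rw [approvalVec_of_le (not_lt.mp h)]; omega
  have hlow (d : Fin m) (hd : (d : ℕ) + 1 < t) :
      score (approvalVec k) (twoType (Equiv.refl _) (tightB t h0 ht) : Fin n → Pref m) d ≤ 1 := by
    rw [hscore, approvalVec_of_le (r := tightB t h0 ht d) (by rw [tightB_of_lt t h0 ht hd]; omega),
      mul_zero, add_zero]
    exact approvalVec_le_one
  rw [approval_eq_winner]
  refine winner_eq_of_forall _ _ (fun d => ?_) fun d hd => ?_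
  · by_cases hd : (d : ℕ) + 1 < t
    · exact hp ▸ (hlow d hd).trans hp1.le
    · rw [hp, hscore]
      have := approvalVec_antitone (k := k) (Fin.le_def.mpr (by simp only [p]; omega) : p ≤ d)
      have := Nat.mul_le_mul_left (n - 1) (approvalVec_le_one (k := k) (r := tightB t h0 ht d))
      omega
  · exact hp ▸ (hlow d (by rw [Fin.lt_def] at hd; simp only [p] at hd; omega)).trans_lt hp1

theorem pred_le_approval_update_tight_zero (hn : 2 ≤ n) (hmt : m + 1 = 2 * t) (Q : Pref m) :
    t - 1 ≤
      (approval m n t (Function.update (twoType (Equiv.refl _) (tightB t h0 ht)) 0 Q) : ℕ) := by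
  by_contra! hlt
  obtain ⟨y, hyS, hyQ⟩ := exists_mem_approvalVec_eq_one (k := t) Q (S := Ici ⟨t - 1, by omega⟩)
    (by rw [Fin.card_Ici]; simp only; omega)
  have hBy : (tightB t h0 ht y : ℕ) < t := (tightB_le_of_le t h0 ht
    (by have := Fin.le_def.mp (mem_Ici.mp hyS); simp only at this; omega)).trans_lt (by omega)
  have hy := score_update_twoType_zero (n := n) (approvalVec t) (Equiv.refl _) (tightB t h0 ht) Q y
  rw [hyQ, approvalVec_of_lt hBy, mul_one] at hy
  have hmax := score_le_score_winner (n := n) (approvalVec t)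
    (Function.update (twoType (Equiv.refl _) (tightB t h0 ht)) 0 Q) y
  rw [approval_eq_winner] at hlt
  generalize winner (approvalVec t) (Function.update (twoType (Equiv.refl _) (tightB t h0 ht))
    (0 : Fin n) Q) = w at hlt hmax
  have hBw : t ≤ (tightB t h0 ht w : ℕ) := by rw [tightB_of_lt t h0 ht (by omega)]; omega
  have hw := score_update_twoType_zero (n := n) (approvalVec t) (Equiv.refl _) (tightB t h0 ht) Q w
  rw [approvalVec_of_le hBw, mul_zero, add_zero] at hw
  have := approvalVec_le_one (k := t) (r := Q w)
  omega

theorem approval_update_tight_ne_self (ht1 : 1 < t) {v : Fin n} (hv : v ≠ 0) (Q : Pref m) :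
    approval m n t (Function.update (twoType (Equiv.refl _) (tightB t h0 ht)) v Q) ≠ ⟨t, ht⟩ := by
  have hp : (⟨t - 1, by omega⟩ : Fin m) < ⟨t, ht⟩ := Fin.mk_lt_mk.mpr (by omega)
  rw [approval_eq_winner]
  refine winner_ne_of_lt_of_score_le _ _ hp ?_
  have hst := score_update_twoType_of_ne (approvalVec t) (Equiv.refl _) (tightB t h0 ht) Q hv
    ⟨t, ht⟩
  have hsp := score_update_twoType_of_ne (approvalVec t) (Equiv.refl _) (tightB t h0 ht) Q hv
    ⟨t - 1, by omega⟩
  rw [Equiv.refl_apply, approvalVec_of_le (r := ⟨t, ht⟩) le_rfl,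
    approvalVec_of_lt (r := tightB t h0 ht _) (by rw [tightB_self]; omega)] at hst
  rw [Equiv.refl_apply, approvalVec_of_lt (r := ⟨t - 1, _⟩) (by simp only; omega),
    approvalVec_of_lt (r := tightB t h0 ht _) (by rw [tightB_pred]; omega)] at hsp
  have := approvalVec_le_one (k := t) (r := Q ⟨t, ht⟩)
  omega

theorem approval_tight_not_manipulable (hn : 2 ≤ n) (hmt : m + 1 = 2 * t) :
    ¬ Manipulable (approval m n t) (twoType (Equiv.refl _) (tightB t h0 ht)) := by
  rintro ⟨v, Q, hlt⟩
  rw [approval_tight_eq_pred t h0 ht hn (by omega) (by omega) (by omega)] at hlt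
  by_cases hv : v = 0
  · subst hv
    simp only [twoType, if_true, Equiv.refl_apply, Fin.lt_def] at hlt
    exact (pred_le_approval_update_tight_zero t h0 ht hn hmt Q).not_gt hlt
  · simp only [twoType, if_neg hv, Fin.lt_def, tightB_pred] at hlt
    exact approval_update_tight_ne_self t h0 ht (by omega) hv Q
      ((tightB t h0 ht).injective (Fin.ext (by rw [tightB_self]; omega)))

theorem approval_update_tight_liePref (hn : 3 ≤ n) (hk : 2 ≤ k) (hkt : k < t) (hkm : k + t ≤ m)
    {v : Fin n} (hv : v ≠ 0) :
    approval m n k (Function.update (twoType (Equiv.refl _) (tightB t h0 ht)) v (liePref t ht h0))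
      = ⟨t, ht⟩ := by
  have hscore := score_update_twoType_of_ne (approvalVec k) (Equiv.refl _) (tightB t h0 ht)
    (liePref t ht h0) hv
  have hlie (d : Fin m) (hd : (d : ℕ) < t) : approvalVec k (liePref t ht h0 d) = 0 :=
    approvalVec_of_le ((le_liePref_of_lt t ht h0 hd).trans' (by omega))
  have hst := hscore ⟨t, ht⟩
  rw [Equiv.refl_apply, approvalVec_of_le (r := ⟨t, ht⟩) (by simp only; omega),
    approvalVec_of_lt (r := tightB t h0 ht _) (by rw [tightB_self]; omega),
    approvalVec_of_lt (r := liePref t ht h0 _) (by rw [liePref_self]; omega)] at hst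
  rw [approval_eq_winner]
  refine winner_eq_of_forall _ _ (fun d => ?_) fun d hd => ?_
  · have hsd := hscore d
    -- `A` approves `0, …, k - 1` and the lie approves `t, …, t + k - 1`
    have : approvalVec k d + approvalVec k (liePref t ht h0 d) ≤ 1 := by
      by_cases hd : (d : ℕ) < t
      · rw [hlie d hd]; exact approvalVec_le_one
      · rw [approvalVec_of_le (r := d) (by omega), zero_add]; exact approvalVec_le_one
    rw [Equiv.refl_apply] at hsd
    rcases approvalVec_eq_zero_or_one (k := k) (r := tightB t h0 ht d) with h | h <;>
      rw [h] at hsd <;> omega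
  · have hsd := hscore d
    have hd : (d : ℕ) < t := hd
    rw [Equiv.refl_apply, hlie d hd] at hsd
    by_cases hdt : (d : ℕ) + 1 < t
    · rw [approvalVec_of_le (r := tightB t h0 ht d) (by rw [tightB_of_lt t h0 ht hdt]; omega)]
        at hsd
      have := approvalVec_le_one (k := k) (r := d)
      omega
    · have hdp : d = ⟨t - 1, by omega⟩ := Fin.ext (by simp only; omega)
      rw [hdp] at hsd ⊢
      rw [approvalVec_of_le (r := ⟨t - 1, _⟩) (by simp only; omega),
        approvalVec_of_lt (r := tightB t h0 ht _) (by rw [tightB_pred]; omega)] at hsd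
      omega

theorem approval_tight_manipulable_of_three_le (hn : 3 ≤ n) (hk : 2 ≤ k) (hkt : k < t)
    (hkm : k + t ≤ m) :
    Manipulable (approval m n k) (twoType (Equiv.refl _) (tightB t h0 ht)) := by
  have := Fin.nontrivial_iff_two_le.mpr (by omega : 2 ≤ n)
  obtain ⟨v, hv⟩ := exists_ne (0 : Fin n)
  refine ⟨v, liePref t ht h0, ?_⟩
  rw [approval_update_tight_liePref t h0 ht hn hk hkt hkm hv,
    approval_tight_eq_pred t h0 ht (by omega) hk (by omega) fun _ => hn]
  simp only [twoType, if_neg hv, Fin.lt_def, tightB_self, tightB_pred]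
  omega

theorem approval_tight_two_eq_zero (hk : 2 ≤ k) (hkt : k < t) (hkm : k + t ≤ m + 1) :
    approval m 2 k (twoType (Equiv.refl _) (tightB t h0 ht)) = 0 := by
  have hscore := score_twoType (n := 2) (approvalVec k) (Equiv.refl _) (tightB t h0 ht)
  rw [approval_eq_winner]
  refine winner_eq_of_forall _ _ (fun d => ?_) fun d hd => absurd hd (Fin.not_lt_zero d)
  rw [hscore, hscore, Equiv.refl_apply, Equiv.refl_apply,
    approvalVec_of_lt (r := (0 : Fin m)) (by simp only [Fin.val_zero]; omega),
    approvalVec_of_le (r := tightB t h0 ht 0) (by rw [tightB_zero t h0 ht (by omega)]; omega)]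
  by_cases hd : (d : ℕ) < k
  · rw [approvalVec_of_le (r := tightB t h0 ht d) (by rw [tightB_of_lt t h0 ht (by omega)]; omega)]
    have := approvalVec_le_one (k := k) (r := d)
    omega
  · rw [approvalVec_of_le (r := d) (by omega)]
    have := approvalVec_le_one (k := k) (r := tightB t h0 ht d)
    omega

theorem approval_tight_manipulable_two (hk : 2 ≤ k) (hkt : k < t) (hkm : k + t ≤ m + 1) :
    Manipulable (approval m 2 k) (twoType (Equiv.refl _) (tightB t h0 ht)) := by
  have hm : 1 < m := by omega
  refine ⟨1, liePref 1 hm one_pos, ?_⟩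
  rw [approval_update_refl_liePref_one hm hk (by omega),
    approval_tight_two_eq_zero t h0 ht hk hkt hkm]
  simp only [twoType, Fin.lt_def, if_neg (by decide : (1 : Fin 2) ≠ 0),
    tightB_of_lt t h0 ht (show ((⟨1, hm⟩ : Fin m) : ℕ) + 1 < t by simp only; omega),
    tightB_zero t h0 ht (by omega)]
  omega

end Tight

/-- For `2 ≤ i < j ≤ m-1`, `n ≥ 2`, and `m < 2j`: `α_j ≱_PS α_i`. -/
theorem stmt_5 (m n i j : ℕ) [NeZero m] (hi : 2 ≤ i) (hij : i < j) (hj : j ≤ m - 1)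
    (hn : 2 ≤ n) (hm : m < 2 * j) :
    ∃ P : Fin n → Pref m,
      Manipulable (approval m n i) P ∧ ¬ Manipulable (approval m n j) P := by
  have : NeZero n := ⟨by omega⟩
  rcases Nat.lt_or_ge (m + 1) (2 * j) with hwide | htight
  · have hL : m - j + 1 < m := by omega
    exact ⟨_, approval_wide_manipulable _ hL hn (by omega) hi (by omega),
      approval_wide_not_manipulable _ hL (by omega) (by omega)⟩
  · have h0 : 0 < j := by omega
    have hjm : j < m := by omega
    refine ⟨_, ?_, approval_tight_not_manipulable j h0 hjm hn (by omega)⟩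
    rcases hn.eq_or_lt with rfl | hn3
    · exact approval_tight_manipulable_two j h0 hjm hi hij (by omega)
    · exact approval_tight_manipulable_of_three_le j h0 hjm hn3 hi hij (by omega)
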